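/- Let G ⊆ ℤ^d be a finite connected set with at least 3 points, regarded as a graph with edges between points at Manhattan distance 1. There exists an agent algorithm with 0 bits of memory and sensing range V = diam(G) that patrols G if and only if G has a Hamiltonian cycle. -/

import Mathlib

/-
With sensing range `diam G` the agent sees all of `G` from every vertex (ℓ¹ distance is at most
graph distance), and since a nonempty finite subset of `ℤ^d` is not mapped into itself by a
nonzero translation, the view `S_V(p)` determines `p`. So memoryless agents are exactly maps
`f : G → G` sending every vertex to a neighbour, and such an agent patrols iff every `f`-orbit
visits every vertex. Then `f` cyclically permutes `G`, which is the same as a copy of the cycle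
graph on all `|G|` vertices, i.e. a Hamiltonian cycle once `|G| ≥ 3`.
-/

open Finset

/-- Manhattan (ℓ¹) norm of an integer vector. -/
def manhattan {d : ℕ} (p : Fin d → ℤ) : ℤ := ∑ i, |p i|

/-- The grid graph vertex set `[n 0] × ⋯ × [n (d-1)]`. -/
def grid {d : ℕ} (n : Fin d → ℕ) : Set (Fin d → ℤ) :=
  {p | ∀ i, 1 ≤ p i ∧ p i ≤ (n i : ℤ)}

/-- Sensing data `S_V(p)`: relative positions of points of `D` within
Manhattan distance `V` of `p`. -/
def sense {d : ℕ} (D : Set (Fin d → ℤ)) (V : ℕ) (p : Fin d → ℤ) : Set (Fin d → ℤ) :=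
  {q | p + q ∈ D ∧ manhattan q ≤ (V : ℤ)}

/-- A deterministic agent algorithm with `b` bits of memory: maps sensing data and a
memory state to a step and a new memory state. -/
structure Agent (d b : ℕ) where
  act : Set (Fin d → ℤ) → (Fin b → Bool) → (Fin d → ℤ) × (Fin b → Bool)

namespace Agent

/-- Validity: at every vertex of `D`, in every memory state, the chosen step is a
unit step leading to a vertex of `D`. -/
def Valid {d b : ℕ} (A : Agent d b) (D : Set (Fin d → ℤ)) (V : ℕ) : Prop :=
  ∀ p ∈ D, ∀ m, manhattan (A.act (sense D V p) m).1 = 1 ∧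
    (A.act (sense D V p) m).1 ∈ sense D V p

/-- The trajectory (position, memory) of the agent after `t` steps, starting from
position `v` and memory state `m`. -/
def traj {d b : ℕ} (A : Agent d b) (D : Set (Fin d → ℤ)) (V : ℕ)
    (v : Fin d → ℤ) (m : Fin b → Bool) : ℕ → (Fin d → ℤ) × (Fin b → Bool)
  | 0 => (v, m)
  | t + 1 =>
      let s := Agent.traj A D V v m t
      (s.1 + (A.act (sense D V s.1) s.2).1, (A.act (sense D V s.1) s.2).2)

/-- The agent patrols `D`: it is valid, and from any initial position in `D` and any
initial memory state, its trajectory visits every vertex of `D` within finitely many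
steps. -/
def Patrols {d b : ℕ} (A : Agent d b) (D : Set (Fin d → ℤ)) (V : ℕ) : Prop :=
  A.Valid D V ∧ ∀ v₁ ∈ D, ∀ m, ∀ v ∈ D, ∃ t, (A.traj D V v₁ m t).1 = v

end Agent

/-- The graph on a set of integer vectors with edges between points at Manhattan
distance 1. -/
def latticeGraph {d : ℕ} (S : Set (Fin d → ℤ)) : SimpleGraph S where
  Adj p q := manhattan (p.1 - q.1) = 1
  symm := by
    constructor
    intro p q h
    simp only [manhattan, Pi.sub_apply] at h ⊢
    simpa [abs_sub_comm] using h
  loopless := by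
    constructor
    intro p h
    simp [manhattan] at h

/-- The `d`-dimensional grid graph `[n 0] × ⋯ × [n (d-1)]`. -/
def gridGraph {d : ℕ} (n : Fin d → ℕ) : SimpleGraph (grid n) :=
  latticeGraph (grid n)

namespace SimpleGraph

variable {α : Type*} {H : SimpleGraph α}

def IsPatrolMap (H : SimpleGraph α) (f : α → α) : Prop :=
  (∀ p, H.Adj p (f p)) ∧ ∀ p q, ∃ t, f^[t] p = q

open Function

lemma cycleGraph_minimalPeriod_isContained {f : α → α} (hadj : ∀ p, H.Adj p (f p)) (q : α) :
    cycleGraph (minimalPeriod f q) ⊑ H := by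
  set k := minimalPeriod f q
  refine ⟨⟨⟨fun i => f^[i.val] q, fun {i j} hij => ?_⟩, fun i j hij =>
    Fin.ext (iterate_injOn_Iio_minimalPeriod i.isLt j.isLt hij)⟩⟩
  have : NeZero k := ⟨Fin.pos_iff_nonempty.mpr ⟨i⟩ |>.ne'⟩
  have hsucc : ∀ a b : Fin k, (b - a).val = 1 → f^[b.val] q = f (f^[a.val] q) := by
    intro a b h
    rw [← add_sub_cancel a b, Fin.val_add, h, iterate_mod_minimalPeriod_eq,
      iterate_succ_apply']
  rcases cycleGraph_adj'.mp hij with h | h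
  · rw [hsucc j i h]; exact (hadj _).symm
  · rw [hsucc i j h]; exact hadj _

lemma IsPatrolMap.minimalPeriod_eq_card [Finite α] {f : α → α} (hf : H.IsPatrolMap f) (q : α) :
    minimalPeriod f q = Nat.card α := by
  have hq : q ∈ periodicPts f := by
    obtain ⟨t, ht⟩ := hf.2 (f q) q
    exact ⟨t + 1, t.succ_pos, by rwa [IsPeriodicPt, IsFixedPt, iterate_succ_apply]⟩
  have hbij : Bijective fun i : Fin (minimalPeriod f q) => f^[i.val] q := by
    refine ⟨fun i j hij => Fin.ext (iterate_injOn_Iio_minimalPeriod i.isLt j.isLt hij),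
      fun p => ?_⟩
    obtain ⟨t, rfl⟩ := hf.2 q p
    exact ⟨⟨t % _, Nat.mod_lt _ (minimalPeriod_pos_of_mem_periodicPts hq)⟩,
      iterate_mod_minimalPeriod_eq⟩
  simpa using Nat.card_eq_of_bijective _ hbij

lemma IsPatrolMap.exists_isHamiltonianCycle [Finite α] [DecidableEq α] {f : α → α}
    (hf : H.IsPatrolMap f) (hcard : 3 ≤ Nat.card α) :
    ∃ (v : α) (c : H.Walk v v), c.IsHamiltonianCycle := by
  have : Fintype α := Fintype.ofFinite α
  obtain ⟨q⟩ : Nonempty α := (Nat.card_pos_iff.mp (by omega)).1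
  have hk := hf.minimalPeriod_eq_card q
  obtain ⟨v, c, hc, hlen⟩ := (cycleGraph_isContained_iff (by omega)).mp
    (cycleGraph_minimalPeriod_isContained hf.1 q)
  exact ⟨v, c, Walk.isHamiltonianCycle_iff_isCycle_and_length_eq.mpr
    ⟨hc, by rw [hlen, hk, Nat.card_eq_fintype_card]⟩⟩

open Fin.NatCast in
lemma exists_isPatrolMap_of_surjective_copy {n : ℕ} (φ : Copy (cycleGraph (n + 2)) H)
    (hφ : Surjective φ) : ∃ f, H.IsPatrolMap f := by
  let e := Equiv.ofBijective φ ⟨φ.injective, hφ⟩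
  have hiter : ∀ t p, (fun p => e (e.symm p + 1))^[t] p = e (e.symm p + (t : Fin (n + 2))) := by
    intro t
    induction t with
    | zero => simp
    | succ t ih => intro p; simp [iterate_succ_apply', ih, add_assoc]
  refine ⟨fun p => e (e.symm p + 1), fun p => ?_, fun p q => ⟨(e.symm q - e.symm p).val, ?_⟩⟩
  · have hadj : (cycleGraph (n + 2)).Adj (e.symm p) (e.symm p + 1) :=
      cycleGraph_adj.mpr (Or.inr (add_sub_cancel_left _ _))
    convert φ.toHom.map_adj hadj using 1
    · exact (e.apply_symm_apply p).symm
    · rfl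
  · rw [hiter, Fin.cast_val_eq_self, add_sub_cancel, Equiv.apply_symm_apply]

lemma Walk.IsHamiltonianCycle.exists_isPatrolMap [DecidableEq α] {v : α} {c : H.Walk v v}
    (hc : c.IsHamiltonianCycle) : ∃ f, H.IsPatrolMap f := by
  have : Fintype α := @Fintype.ofFinite α hc.finite
  have h3 := hc.three_le_length
  obtain ⟨n, hn⟩ : ∃ n, c.length = n + 2 := ⟨c.length - 2, by omega⟩
  obtain ⟨φ⟩ := (cycleGraph_isContained_iff (n := n + 2) (by omega)).mpr ⟨v, c, hc.isCycle, hn⟩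
  refine exists_isPatrolMap_of_surjective_copy φ ?_
  refine ((Fintype.bijective_iff_injective_and_card φ).mpr ⟨φ.injective, ?_⟩).2
  rw [Fintype.card_fin, ← hn, hc.length_eq]

theorem exists_isPatrolMap_iff_exists_isHamiltonianCycle [Finite α] [DecidableEq α]
    (hcard : 3 ≤ Nat.card α) :
    (∃ f, H.IsPatrolMap f) ↔ ∃ (v : α) (c : H.Walk v v), c.IsHamiltonianCycle :=
  ⟨fun ⟨_, hf⟩ => hf.exists_isHamiltonianCycle hcard,
    fun ⟨_, _, hc⟩ => hc.exists_isPatrolMap⟩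

end SimpleGraph

/-- Translation by `t` permutes `s`, so comparing sums over `s` gives `#s • t = 0`. -/
lemma Set.Finite.eq_zero_of_forall_add_mem {M : Type*} [AddCommGroup M] [IsAddTorsionFree M]
    {s : Set M} (hs : s.Finite) (hne : s.Nonempty) {t : M} (h : ∀ x ∈ s, x + t ∈ s) :
    t = 0 := by
  classical
  lift s to Finset M using hs
  have himage : s.image (· + t) = s :=
    Finset.eq_of_subset_of_card_le (Finset.image_subset_iff.mpr h)
      (Finset.card_image_of_injective _ (add_left_injective t)).ge
  have hsum := Finset.sum_image (f := fun x => x) (s := s) (add_left_injective t).injOn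
  rw [himage, Finset.sum_add_distrib, Finset.sum_const, left_eq_add] at hsum
  exact (nsmul_eq_zero_iff_right (Finset.card_ne_zero.mpr (by simpa using hne))).mp hsum

section Lattice

variable {d : ℕ}

lemma manhattan_neg (p : Fin d → ℤ) : manhattan (-p) = manhattan p := by
  simp [manhattan]

lemma manhattan_sub_comm (p q : Fin d → ℤ) : manhattan (p - q) = manhattan (q - p) := by
  rw [← neg_sub, manhattan_neg]

lemma manhattan_add_le (p q : Fin d → ℤ) : manhattan (p + q) ≤ manhattan p + manhattan q := by
  simp only [manhattan, ← Finset.sum_add_distrib]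
  exact Finset.sum_le_sum fun i _ => abs_add_le _ _

lemma manhattan_sub_le_length {S : Set (Fin d → ℤ)} {x y : S} (w : (latticeGraph S).Walk x y) :
    manhattan (y.1 - x.1) ≤ w.length := by
  induction w with
  | nil => simp [manhattan]
  | @cons u v z h w ih =>
    calc manhattan (z.1 - u.1) = manhattan ((v.1 - u.1) + (z.1 - v.1)) := by
          rw [sub_add_sub_cancel']
      _ ≤ manhattan (v.1 - u.1) + manhattan (z.1 - v.1) := manhattan_add_le _ _
      _ ≤ 1 + w.length := by
          rw [manhattan_sub_comm]
          exact add_le_add h.le ih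
      _ = (w.cons h).length := by
          rw [SimpleGraph.Walk.length_cons]
          push_cast
          ring

def IsFullyVisible (D : Set (Fin d → ℤ)) (V : ℕ) : Prop :=
  ∀ p ∈ D, ∀ q ∈ D, manhattan (q - p) ≤ V

lemma isFullyVisible_diam {S : Set (Fin d → ℤ)} (hS : S.Finite)
    (hconn : (latticeGraph S).Connected) : IsFullyVisible S (latticeGraph S).diam := by
  intro p hp q hq
  have : Finite S := hS.to_subtype
  have : Nonempty S := hconn.nonempty
  obtain ⟨w, hw⟩ := (hconn ⟨p, hp⟩ ⟨q, hq⟩).exists_walk_length_eq_dist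
  calc manhattan (q - p) ≤ w.length := manhattan_sub_le_length w
    _ ≤ (latticeGraph S).diam := by
      rw [hw]
      exact_mod_cast SimpleGraph.dist_le_diam (SimpleGraph.connected_iff_ediam_ne_top.mp hconn)

variable {D : Set (Fin d → ℤ)} {V : ℕ}

lemma IsFullyVisible.mem_sense_iff (hV : IsFullyVisible D V) {p x : Fin d → ℤ} (hp : p ∈ D) :
    x ∈ sense D V p ↔ p + x ∈ D :=
  ⟨And.left, fun h => ⟨h, by simpa using hV p hp _ h⟩⟩

lemma IsFullyVisible.injOn_sense (hV : IsFullyVisible D V) (hD : D.Finite) :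
    Set.InjOn (sense D V) D := by
  intro p hp q hq hpq
  have hshift : ∀ x ∈ D, x + (q - p) ∈ D := by
    intro x hx
    have hx' : x - p ∈ sense D V q := hpq ▸ (hV.mem_sense_iff hp).mpr (by simpa using hx)
    simpa [add_sub_left_comm, add_comm] using (hV.mem_sense_iff hq).mp hx'
  exact (sub_eq_zero.mp (hD.eq_zero_of_forall_add_mem ⟨p, hp⟩ hshift)).symm

end Lattice

namespace Agent

open Function

variable {d : ℕ} {D : Set (Fin d → ℤ)} {V : ℕ}

def move (A : Agent d 0) (D : Set (Fin d → ℤ)) (V : ℕ) (p : Fin d → ℤ) : Fin d → ℤ :=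
  p + (A.act (sense D V p) finZeroElim).1

lemma traj_fst_eq_iterate_move (A : Agent d 0) (v : Fin d → ℤ) (m : Fin 0 → Bool) (t : ℕ) :
    (A.traj D V v m t).1 = (A.move D V)^[t] v := by
  induction t with
  | zero => rfl
  | succ t ih =>
    rw [iterate_succ_apply', ← ih, traj, Subsingleton.elim (A.traj D V v m t).2 finZeroElim]
    rfl

lemma Patrols.exists_isPatrolMap {A : Agent d 0} (hA : A.Patrols D V) :
    ∃ f, (latticeGraph D).IsPatrolMap f := by
  have hmaps : Set.MapsTo (A.move D V) D D := fun p hp => (hA.1 p hp finZeroElim).2.1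
  refine ⟨hmaps.restrict _ _ _, fun p => ?_, fun p q => ?_⟩
  · change manhattan (p.1 - (p.1 + _)) = 1
    rw [sub_add_cancel_left, manhattan_neg]
    exact (hA.1 p p.2 finZeroElim).1
  · obtain ⟨t, ht⟩ := hA.2 p p.2 finZeroElim q q.2
    refine ⟨t, Subtype.ext ?_⟩
    rw [hmaps.iterate_restrict, Set.MapsTo.val_restrict_apply, ← ht,
      traj_fst_eq_iterate_move]

open Classical in
noncomputable def ofMap (D : Set (Fin d → ℤ)) (V : ℕ) (f : D → D) : Agent d 0 where
  act S m :=
    (if hp : invFunOn (sense D V) D S ∈ D then (f ⟨_, hp⟩).1 - invFunOn (sense D V) D S else 0, m)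

lemma ofMap_act_sense (hinj : Set.InjOn (sense D V) D) (f : D → D) (p : D) (m : Fin 0 → Bool) :
    ((ofMap D V f).act (sense D V p) m).1 = (f p).1 - p.1 := by
  have hp : invFunOn (sense D V) D (sense D V p) = p := hinj.leftInvOn_invFunOn p.2
  simp only [ofMap]
  rw [dif_pos (by rw [hp]; exact p.2)]
  simp only [hp]

lemma ofMap_patrols (hV : IsFullyVisible D V) (hD : D.Finite) {f : D → D}
    (hf : (latticeGraph D).IsPatrolMap f) : (ofMap D V f).Patrols D V := by
  have hact := ofMap_act_sense (hV.injOn_sense hD) f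
  have hmove : ∀ p : D, (ofMap D V f).move D V p = f p := fun p => by
    rw [move, hact, add_sub_cancel]
  have hiter : ∀ t (p : D), ((ofMap D V f).move D V)^[t] p = f^[t] p :=
    fun t p => (Semiconj.iterate_right (fun p => (hmove p).symm) t p).symm
  refine ⟨fun p hp m => ?_, fun p hp m q hq => ?_⟩
  · rw [hact ⟨p, hp⟩]
    refine ⟨(manhattan_sub_comm _ _).trans (hf.1 ⟨p, hp⟩), (hV.mem_sense_iff hp).mpr ?_⟩
    rw [add_sub_cancel]
    exact (f _).2
  · obtain ⟨t, ht⟩ := hf.2 ⟨p, hp⟩ ⟨q, hq⟩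
    exact ⟨t, by rw [traj_fst_eq_iterate_move, hiter t ⟨p, hp⟩, ht]⟩

lemma exists_patrols_iff_exists_isPatrolMap (hV : IsFullyVisible D V) (hD : D.Finite) :
    (∃ A : Agent d 0, A.Patrols D V) ↔ ∃ f, (latticeGraph D).IsPatrolMap f :=
  ⟨fun ⟨_, hA⟩ => hA.exists_isPatrolMap, fun ⟨_, hf⟩ => ⟨_, ofMap_patrols hV hD hf⟩⟩

end Agent

theorem zero_bit_full_visibility_patrol_iff_hamiltonian_general {d : ℕ}
    (G : Set (Fin d → ℤ)) (hfin : G.Finite) (hcard : 3 ≤ G.ncard)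
    (hconn : (latticeGraph G).Connected) :
    (∃ A : Agent d 0, A.Patrols G ((latticeGraph G).diam)) ↔
      ∃ (v : G) (c : (latticeGraph G).Walk v v), c.IsHamiltonianCycle := by
  have : Finite G := hfin.to_subtype
  rw [Agent.exists_patrols_iff_exists_isPatrolMap (isFullyVisible_diam hfin hconn) hfin]
  exact SimpleGraph.exists_isPatrolMap_iff_exists_isHamiltonianCycle
    (by rwa [Nat.card_coe_set_eq])

/-- Let `G ⊆ ℤ^d` be finite and connected with at least 3 points.
There is an agent algorithm with `0` bits of memory and sensing range `V = diam(G)`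
that patrols `G` iff `G` has a Hamiltonian cycle. -/
theorem zero_bit_full_visibility_patrol_iff_hamiltonian {d : ℕ} (hd : 1 ≤ d)
    (G : Set (Fin d → ℤ)) (hfin : G.Finite) (hcard : 3 ≤ G.ncard)
    (hconn : (latticeGraph G).Connected) :
    (∃ A : Agent d 0, A.Patrols G ((latticeGraph G).diam)) ↔
      ∃ (v : G) (c : (latticeGraph G).Walk v v), c.IsHamiltonianCycle :=
  zero_bit_full_visibility_patrol_iff_hamiltonian_general G hfin hcard hconn
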